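/- Online mirror descent regret bound for linear losses: let h : ℝ^m → ℝ be differentiable and σ-strongly convex with respect to the ℓ1-norm on the nonnegative orthant (σ > 0), with Bregman divergence V_h(u,v) = h(u) − h(v) − ∇h(v)·(u − v); let η > 0, G ≥ 0, and n a positive integer. Let φ_1,…,φ_n ∈ ℝ^m satisfy ‖φ_t‖_∞ ≤ G, let μ_1 ∈ ℝ^m with μ_1 ≥ 0 componentwise, and for each t ∈ {1,…,n} suppose μ_{t+1} minimizes μ ↦ φ_t·μ + (1/η)·V_h(μ, μ_t) over {μ ∈ ℝ^m : μ ≥ 0 componentwise}. Then for every μ ∈ ℝ^m with μ ≥ 0 componentwise: Σ_{t=1}^{n} φ_t·(μ_t − μ) ≤ G²·η·n/(2σ) + V_h(μ, μ_1)/η. -/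

import Mathlib

/-!
The first-order optimality condition of the prox step, combined with the three-point identity
`V(ν, p) - V(ν, q) - V(q, p) = (∇h q - ∇h p)·(ν - q)`, gives
`φₜ·(μₜ₊₁ - ν) ≤ (V(ν, μₜ) - V(ν, μₜ₊₁) - V(μₜ₊₁, μₜ)) / η`.
The remaining term `φₜ·(μₜ - μₜ₊₁) ≤ G ‖μₜ - μₜ₊₁‖₁` is absorbed, by Young's inequality, into
`V(μₜ₊₁, μₜ) / η ≥ σ ‖μₜ₊₁ - μₜ‖₁² / (2η)`, at the price of `G²η / (2σ)` per round.
Summing over the rounds telescopes the divergences, and `V(ν, μₙ₊₁) ≥ 0` is dropped.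
-/

open Finset
open scoped Matrix

theorem IsMinOn.hasFDerivAt_apply_sub_nonneg {E : Type*} [NormedAddCommGroup E]
    [NormedSpace ℝ E] {f : E → ℝ} {f' : E →L[ℝ] ℝ} {s : Set E} {x y : E} (hs : Convex ℝ s)
    (hmin : IsMinOn f s x) (hf : HasFDerivAt f f' x) (hx : x ∈ s) (hy : y ∈ s) :
    0 ≤ f' (y - x) :=
  hmin.localize.hasFDerivWithinAt_nonneg hf.hasFDerivWithinAt
    (sub_mem_posTangentConeAt_of_segment_subset (hs.segment_subset hx hy))

theorem Fin.sum_univ_castSucc_sub_succ {M : Type*} [AddCommGroup M] :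
    ∀ {n : ℕ} (f : Fin (n + 1) → M),
      ∑ i : Fin n, (f i.castSucc - f i.succ) = f 0 - f (Fin.last n)
  | 0, f => by simp
  | n + 1, f => by
    rw [Fin.sum_univ_castSucc]
    simp only [Fin.succ_castSucc]
    rw [Fin.sum_univ_castSucc_sub_succ (fun i => f i.castSucc)]
    simp

theorem mul_le_div_add_mul_sq (G s : ℝ) {σ η : ℝ} (hσ : 0 < σ) (hη : 0 < η) :
    G * s ≤ G ^ 2 * η / (2 * σ) + σ / (2 * η) * s ^ 2 := by
  have hsq : G ^ 2 * η / (2 * σ) + σ / (2 * η) * s ^ 2 - G * s =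
      (G * η - σ * s) ^ 2 / (2 * σ * η) := by
    field_simp
    ring
  linarith [show 0 ≤ (G * η - σ * s) ^ 2 / (2 * σ * η) by positivity]

section Bregman

variable {ι : Type*} [Fintype ι]

def dotProductCLM (g : ι → ℝ) : (ι → ℝ) →L[ℝ] ℝ :=
  ∑ j, g j • ContinuousLinearMap.proj j

@[simp]
theorem dotProductCLM_apply (g x : ι → ℝ) : dotProductCLM g x = g ⬝ᵥ x := by
  simp [dotProductCLM, dotProduct]

theorem hasFDerivAt_dotProduct (g x : ι → ℝ) :
    HasFDerivAt (fun y => g ⬝ᵥ y) (dotProductCLM g) x := by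
  convert (dotProductCLM g).hasFDerivAt (x := x) using 1
  ext y
  simp

theorem dotProduct_le_mul_sum_abs {g : ι → ℝ} {G : ℝ} (hg : ∀ j, |g j| ≤ G) (x : ι → ℝ) :
    g ⬝ᵥ x ≤ G * ∑ j, |x j| := by
  rw [mul_sum]
  refine sum_le_sum fun j _ => ?_
  calc g j * x j ≤ |g j| * |x j| := by rw [← abs_mul]; exact le_abs_self _
    _ ≤ G * |x j| := mul_le_mul_of_nonneg_right (hg j) (abs_nonneg _)

def bregman (h : (ι → ℝ) → ℝ) (h' : (ι → ℝ) → ι → ℝ) (u v : ι → ℝ) : ℝ :=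
  h u - h v - h' v ⬝ᵥ (u - v)

variable {h : (ι → ℝ) → ℝ} {h' : (ι → ℝ) → ι → ℝ}

theorem bregman_sub_bregman_sub_bregman (u v w : ι → ℝ) :
    bregman h h' u v - bregman h h' u w - bregman h h' w v = (h' w - h' v) ⬝ᵥ (u - w) := by
  simp only [bregman, dotProduct_sub, sub_dotProduct]
  ring

theorem hasFDerivAt_bregman_left {u : ι → ℝ} (hu : HasFDerivAt h (dotProductCLM (h' u)) u)
    (v : ι → ℝ) :
    HasFDerivAt (fun x => bregman h h' x v) (dotProductCLM (h' u) - dotProductCLM (h' v)) u := by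
  have hfun : (fun x => bregman h h' x v) = fun x => h x - h v - (h' v ⬝ᵥ x - h' v ⬝ᵥ v) := by
    simp only [bregman, dotProduct_sub]
  rw [hfun]
  exact (hu.sub_const (h v)).sub ((hasFDerivAt_dotProduct (h' v) u).sub_const _)

theorem dotProduct_sub_le_of_isMinOn_prox {s : Set (ι → ℝ)} (hs : Convex ℝ s) {η : ℝ}
    {g p q ν : ι → ℝ} (hdiff : HasFDerivAt h (dotProductCLM (h' q)) q)
    (hmin : IsMinOn (fun x => g ⬝ᵥ x + 1 / η * bregman h h' x p) s q) (hq : q ∈ s) (hν : ν ∈ s) :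
    g ⬝ᵥ (q - ν) ≤ 1 / η * (bregman h h' ν p - bregman h h' ν q - bregman h h' q p) := by
  have hopt := hmin.hasFDerivAt_apply_sub_nonneg hs
    ((hasFDerivAt_dotProduct g q).add ((hasFDerivAt_bregman_left hdiff p).const_mul (1 / η)))
    hq hν
  rw [bregman_sub_bregman_sub_bregman]
  simp only [add_apply, smul_apply, sub_apply, dotProductCLM_apply, smul_eq_mul] at hopt
  simp only [dotProduct_sub, sub_dotProduct] at hopt ⊢
  linarith

theorem mirrorStep_regret_le {s : Set (ι → ℝ)} (hs : Convex ℝ s) {σ η G : ℝ} (hσ : 0 < σ)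
    (hη : 0 < η) {g p q ν : ι → ℝ} (hdiff : HasFDerivAt h (dotProductCLM (h' q)) q)
    (hg : ∀ j, |g j| ≤ G)
    (hstrong : σ / 2 * (∑ j, |q j - p j|) ^ 2 ≤ bregman h h' q p)
    (hmin : IsMinOn (fun x => g ⬝ᵥ x + 1 / η * bregman h h' x p) s q) (hq : q ∈ s) (hν : ν ∈ s) :
    g ⬝ᵥ (p - ν) ≤ G ^ 2 * η / (2 * σ) + 1 / η * (bregman h h' ν p - bregman h h' ν q) := by
  set dist := ∑ j, |q j - p j|
  have hprox := dotProduct_sub_le_of_isMinOn_prox hs hdiff hmin hq hν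
  have hmove : g ⬝ᵥ (p - q) ≤ G * dist :=
    calc g ⬝ᵥ (p - q) ≤ G * ∑ j, |p j - q j| := dotProduct_le_mul_sum_abs hg (p - q)
      _ = G * dist := by simp only [dist, abs_sub_comm]
  have hyoung := mul_le_div_add_mul_sq G dist hσ hη
  have hdamp : σ / (2 * η) * dist ^ 2 ≤ 1 / η * bregman h h' q p := by
    calc σ / (2 * η) * dist ^ 2 = 1 / η * (σ / 2 * dist ^ 2) := by ring
      _ ≤ 1 / η * bregman h h' q p := by gcongr
  have hsplit : g ⬝ᵥ (p - ν) = g ⬝ᵥ (p - q) + g ⬝ᵥ (q - ν) := by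
    simp only [dotProduct_sub]
    ring
  rw [hsplit]
  linarith

end Bregman

theorem stmt8_general
    (m n : ℕ)
    (h : (Fin m → ℝ) → ℝ) (h' : (Fin m → ℝ) → (Fin m → ℝ)) (σ : ℝ) (hσ : 0 < σ)
    (hdiff : ∀ v, HasFDerivAt h
      (∑ j, h' v j • (ContinuousLinearMap.proj j : (Fin m → ℝ) →L[ℝ] ℝ)) v)
    (hstrong : ∀ u v : Fin m → ℝ, (∀ j, 0 ≤ u j) → (∀ j, 0 ≤ v j) →
      h v + (∑ j, h' v j * (u j - v j)) + σ / 2 * (∑ j, |u j - v j|) ^ 2 ≤ h u)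
    (V : (Fin m → ℝ) → (Fin m → ℝ) → ℝ)
    (hV : ∀ u v, V u v = h u - h v - ∑ j, h' v j * (u j - v j))
    (η : ℝ) (hη : 0 < η) (G : ℝ)
    (φ : Fin n → Fin m → ℝ) (hφ : ∀ t j, |φ t j| ≤ G)
    (μ : Fin (n + 1) → Fin m → ℝ) (hμpos : ∀ s j, 0 ≤ μ s j)
    (hMD : ∀ t : Fin n, ∀ ν : Fin m → ℝ, (∀ j, 0 ≤ ν j) →
      (∑ j, φ t j * μ t.succ j) + (1 / η) * V (μ t.succ) (μ t.castSucc) ≤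
        (∑ j, φ t j * ν j) + (1 / η) * V ν (μ t.castSucc)) :
    ∀ ν : Fin m → ℝ, (∀ j, 0 ≤ ν j) →
      ∑ t, ∑ j, φ t j * (μ t.castSucc j - ν j) ≤
        G ^ 2 * η * n / (2 * σ) + V ν (μ 0) / η := by
  intro ν hν
  obtain rfl : V = bregman h h' := funext₂ hV
  have hlb (u v : Fin m → ℝ) (hu : 0 ≤ u) (hv : 0 ≤ v) :
      σ / 2 * (∑ j, |u j - v j|) ^ 2 ≤ bregman h h' u v := by
    rw [hV]
    linarith [hstrong u v hu hv]
  have hstep (t : Fin n) : φ t ⬝ᵥ (μ t.castSucc - ν) ≤ G ^ 2 * η / (2 * σ) +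
      1 / η * (bregman h h' ν (μ t.castSucc) - bregman h h' ν (μ t.succ)) :=
    mirrorStep_regret_le (convex_Ici 0) hσ hη (hdiff _) (hφ t) (hlb _ _ (hμpos _) (hμpos _))
      (isMinOn_iff.mpr (hMD t)) (hμpos _) hν
  have hlast : 0 ≤ bregman h h' ν (μ (Fin.last n)) / η :=
    div_nonneg ((by positivity : (0 : ℝ) ≤ _).trans (hlb _ _ hν (hμpos _))) hη.le
  calc ∑ t, ∑ j, φ t j * (μ t.castSucc j - ν j)
      ≤ ∑ t : Fin n, (G ^ 2 * η / (2 * σ) +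
          1 / η * (bregman h h' ν (μ t.castSucc) - bregman h h' ν (μ t.succ))) :=
        sum_le_sum fun t _ => hstep t
    _ = G ^ 2 * η * n / (2 * σ) + bregman h h' ν (μ 0) / η -
          bregman h h' ν (μ (Fin.last n)) / η := by
        rw [sum_add_distrib, ← mul_sum,
          Fin.sum_univ_castSucc_sub_succ fun i => bregman h h' ν (μ i)]
        simp only [sum_const, card_univ, Fintype.card_fin, nsmul_eq_mul]
        ring
    _ ≤ G ^ 2 * η * n / (2 * σ) + bregman h h' ν (μ 0) / η := by linarith

/-- Online mirror descent regret bound for linear losses. -/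
theorem stmt8
    (m n : ℕ) (hn : 0 < n)
    (h : (Fin m → ℝ) → ℝ) (h' : (Fin m → ℝ) → (Fin m → ℝ)) (σ : ℝ) (hσ : 0 < σ)
    (hdiff : ∀ v, HasFDerivAt h
      (∑ j, h' v j • (ContinuousLinearMap.proj j : (Fin m → ℝ) →L[ℝ] ℝ)) v)
    (hstrong : ∀ u v : Fin m → ℝ, (∀ j, 0 ≤ u j) → (∀ j, 0 ≤ v j) →
      h v + (∑ j, h' v j * (u j - v j)) + σ / 2 * (∑ j, |u j - v j|) ^ 2 ≤ h u)
    (V : (Fin m → ℝ) → (Fin m → ℝ) → ℝ)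
    (hV : ∀ u v, V u v = h u - h v - ∑ j, h' v j * (u j - v j))
    (η : ℝ) (hη : 0 < η) (G : ℝ) (hG : 0 ≤ G)
    (φ : Fin n → Fin m → ℝ) (hφ : ∀ t j, |φ t j| ≤ G)
    (μ : Fin (n + 1) → Fin m → ℝ) (hμpos : ∀ s j, 0 ≤ μ s j)
    (hMD : ∀ t : Fin n, ∀ ν : Fin m → ℝ, (∀ j, 0 ≤ ν j) →
      (∑ j, φ t j * μ t.succ j) + (1 / η) * V (μ t.succ) (μ t.castSucc) ≤
        (∑ j, φ t j * ν j) + (1 / η) * V ν (μ t.castSucc)) :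
    ∀ ν : Fin m → ℝ, (∀ j, 0 ≤ ν j) →
      ∑ t, ∑ j, φ t j * (μ t.castSucc j - ν j) ≤
        G ^ 2 * η * n / (2 * σ) + V ν (μ 0) / η :=
  stmt8_general m n h h' σ hσ hdiff hstrong V hV η hη G φ hφ μ hμpos hMD
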